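/- arXiv:2504.10987 — 5 statements merged into one kernel-verified Lean document; each statement's English description precedes it below -/
import Mathlib

section
/- For every σ > 0, all μ₁, μ₂ ∈ ℝ, and every α ∈ (1,∞), the Rényi divergence of order α between the Gaussian measures N(μ₁, σ²) and N(μ₂, σ²) on ℝ equals α·(μ₁ − μ₂)²/(2σ²). -/
/-! With equal variances the likelihood ratio of `N(μ₁, v)` to `N(μ₂, v)` is the exponential of
an affine function of `x`, so `∫ (dP/dQ)^α dQ` is a value of the moment generating function of
`N(μ₂, v)`: it equals `exp (α (α - 1) (μ₁ - μ₂)² / (2 v))`. -/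

open MeasureTheory Real ProbabilityTheory

/-- Rényi divergence of order `α` between measures `P` and `Q` (with `P ≪ Q`):
`D_α(P‖Q) = (α−1)⁻¹ · log ∫ (dP/dQ)^α dQ`. -/
noncomputable def renyiDiv {Ω : Type*} [MeasurableSpace Ω] (α : ℝ) (P Q : Measure Ω) : ℝ :=
  (α - 1)⁻¹ * Real.log (∫ x, ((P.rnDeriv Q) x).toReal ^ α ∂Q)

open scoped NNReal ENNReal

namespace ProbabilityTheory

lemma rnDeriv_gaussianReal_gaussianReal (μ₁ μ₂ : ℝ) (v₁ : ℝ≥0) {v₂ : ℝ≥0} (hv₂ : v₂ ≠ 0) :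
    (gaussianReal μ₁ v₁).rnDeriv (gaussianReal μ₂ v₂)
      =ᵐ[gaussianReal μ₂ v₂] fun x ↦ gaussianPDF μ₁ v₁ x / gaussianPDF μ₂ v₂ x := by
  refine (gaussianReal_absolutelyContinuous μ₂ hv₂).ae_eq ?_
  rw [gaussianReal_of_var_ne_zero μ₂ hv₂]
  filter_upwards [Measure.rnDeriv_withDensity_right (gaussianReal μ₁ v₁) volume
      (measurable_gaussianPDF μ₂ v₂).aemeasurable
      (ae_of_all _ fun x ↦ (gaussianPDF_pos μ₂ hv₂ x).ne') (ae_of_all _ fun _ ↦ gaussianPDF_ne_top),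
    rnDeriv_gaussianReal μ₁ v₁] with x hx hx₁
  rw [hx, hx₁, ENNReal.div_eq_inv_mul]

lemma gaussianPDFReal_div_gaussianPDFReal (μ₁ μ₂ : ℝ) {v : ℝ≥0} (hv : v ≠ 0) (x : ℝ) :
    gaussianPDFReal μ₁ v x / gaussianPDFReal μ₂ v x
      = rexp ((μ₁ - μ₂) / v * x - (μ₁ ^ 2 - μ₂ ^ 2) / (2 * v)) := by
  have hv' : (v : ℝ) ≠ 0 := by exact_mod_cast hv
  have hnorm : (√(2 * π * v))⁻¹ ≠ 0 := by positivity
  rw [gaussianPDFReal, gaussianPDFReal, mul_div_mul_left _ _ hnorm, ← Real.exp_sub]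
  congr 1
  field_simp
  ring

lemma integral_exp_mul_add_gaussianReal (μ : ℝ) (v : ℝ≥0) (t c : ℝ) :
    ∫ x, rexp (t * x + c) ∂gaussianReal μ v = rexp (μ * t + v * t ^ 2 / 2 + c) := by
  rw [Real.exp_add, ← congrFun mgf_fun_id_gaussianReal t, mgf]
  simp_rw [Real.exp_add, integral_mul_const]

lemma integral_rnDeriv_rpow_gaussianReal (μ₁ μ₂ : ℝ) {v : ℝ≥0} (hv : v ≠ 0) (α : ℝ) :
    ∫ x, ((gaussianReal μ₁ v).rnDeriv (gaussianReal μ₂ v) x).toReal ^ α ∂gaussianReal μ₂ v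
      = rexp (α * (α - 1) * (μ₁ - μ₂) ^ 2 / (2 * v)) := by
  have hv' : (v : ℝ) ≠ 0 := by exact_mod_cast hv
  have hratio : ∀ᵐ x ∂gaussianReal μ₂ v,
      ((gaussianReal μ₁ v).rnDeriv (gaussianReal μ₂ v) x).toReal ^ α
        = rexp (α * (μ₁ - μ₂) / v * x + -(α * (μ₁ ^ 2 - μ₂ ^ 2) / (2 * v))) := by
    filter_upwards [rnDeriv_gaussianReal_gaussianReal μ₁ μ₂ v hv] with x hx
    rw [hx, ENNReal.toReal_div, toReal_gaussianPDF, toReal_gaussianPDF,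
      gaussianPDFReal_div_gaussianPDFReal μ₁ μ₂ hv, ← Real.exp_mul]
    congr 1
    ring
  rw [integral_congr_ae hratio, integral_exp_mul_add_gaussianReal]
  congr 1
  field_simp
  ring

end ProbabilityTheory

lemma renyiDiv_gaussianReal_gaussianReal (μ₁ μ₂ : ℝ) {v : ℝ≥0} (hv : v ≠ 0) {α : ℝ} (hα : α ≠ 1) :
    renyiDiv α (gaussianReal μ₁ v) (gaussianReal μ₂ v) = α * (μ₁ - μ₂) ^ 2 / (2 * v) := by
  rw [renyiDiv, integral_rnDeriv_rpow_gaussianReal μ₁ μ₂ hv, Real.log_exp]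
  have hα₁ : α - 1 ≠ 0 := sub_ne_zero.mpr hα
  field_simp

/-- The Rényi divergence of order `α ∈ (1,∞)` between `N(μ₁, σ²)` and `N(μ₂, σ²)`
equals `α·(μ₁ − μ₂)²/(2σ²)`. -/
theorem renyiDiv_gaussian (σ μ₁ μ₂ : ℝ) (hσ : 0 < σ) (α : ℝ) (hα : 1 < α) :
    renyiDiv α (gaussianReal μ₁ ⟨σ ^ 2, sq_nonneg σ⟩) (gaussianReal μ₂ ⟨σ ^ 2, sq_nonneg σ⟩)
      = α * (μ₁ - μ₂) ^ 2 / (2 * σ ^ 2) :=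
  renyiDiv_gaussianReal_gaussianReal μ₁ μ₂ (ne_of_gt (show 0 < σ ^ 2 by positivity)) hα.ne'
end

section
/- Let C be a finite nonempty set, let ε ≥ 0, Δ > 0, and let s₁, s₂ : C → ℝ satisfy |s₁(c) − s₂(c)| ≤ Δ for every c ∈ C. Define probability mass functions P_i(c) = exp(ε·s_i(c)/(2Δ)) / Σ_{c′∈C} exp(ε·s_i(c′)/(2Δ)) for i = 1, 2. Then P₁(c) ≤ e^ε · P₂(c) for every c ∈ C. Hence the exponential mechanism with score function of sensitivity Δ satisfies ε-DP. -/
open Real Finset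

/-! A change of the score by at most `Δ` moves every exponent `ε s / (2Δ)` by at most `ε / 2`.
This costs a factor `e^{ε/2}` in the weight of the output and another factor `e^{ε/2}` in the
normalising sum, so the probabilities differ by at most `e^ε`. -/

lemma exp_le_exp_mul_exp_of_sub_le {a b δ : ℝ} (h : a - b ≤ δ) :
    exp a ≤ exp δ * exp b := by
  rw [← exp_add]
  exact exp_le_exp.mpr (by linarith)

lemma div_le_mul_mul_div_of_le_mul {a b A B k : ℝ} (hA : 0 < A) (hB : 0 < B)
    (hk : 0 ≤ k) (hb : 0 ≤ b) (ha : a ≤ k * b) (hBA : B ≤ k * A) :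
    a / A ≤ k * k * (b / B) := by
  rw [mul_div_assoc', div_le_div_iff₀ hA hB]
  calc a * B ≤ (k * b) * (k * A) := mul_le_mul ha hBA hB.le (mul_nonneg hk hb)
    _ = k * k * b * A := by ring

lemma exp_div_sum_exp_le_of_abs_sub_le {ι : Type*} [Fintype ι] {f g : ι → ℝ} {δ : ℝ}
    (h : ∀ i, |f i - g i| ≤ δ) (i : ι) :
    exp (f i) / ∑ j, exp (f j) ≤ exp (2 * δ) * (exp (g i) / ∑ j, exp (g j)) := by
  have sum_exp_pos (u : ι → ℝ) : 0 < ∑ j, exp (u j) :=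
    sum_pos (fun j _ => exp_pos (u j)) ⟨i, mem_univ i⟩
  have hfg : exp (f i) ≤ exp δ * exp (g i) :=
    exp_le_exp_mul_exp_of_sub_le (abs_le.mp (h i)).2
  have hgf : ∑ j, exp (g j) ≤ exp δ * ∑ j, exp (f j) := by
    rw [mul_sum]
    exact sum_le_sum fun j _ =>
      exp_le_exp_mul_exp_of_sub_le (by linarith [(abs_le.mp (h j)).1])
  rw [two_mul, exp_add]
  exact div_le_mul_mul_div_of_le_mul (sum_exp_pos f) (sum_exp_pos g) (exp_pos δ).le
    (exp_pos _).le hfg hgf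

theorem exponential_mechanism_dp_general {C : Type*} [Fintype C]
    (ε Δ : ℝ) (hε : 0 ≤ ε) (hΔ : 0 < Δ)
    (s₁ s₂ : C → ℝ) (hs : ∀ c, |s₁ c - s₂ c| ≤ Δ) :
    ∀ c : C,
      Real.exp (ε * s₁ c / (2 * Δ)) / (∑ c' : C, Real.exp (ε * s₁ c' / (2 * Δ)))
        ≤ Real.exp ε *
          (Real.exp (ε * s₂ c / (2 * Δ)) / (∑ c' : C, Real.exp (ε * s₂ c' / (2 * Δ)))) := by
  have exponent_shift (c : C) : |ε * s₁ c / (2 * Δ) - ε * s₂ c / (2 * Δ)| ≤ ε / 2 := by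
    rw [← sub_div, ← mul_sub, abs_div, abs_mul, abs_of_nonneg hε,
      abs_of_pos (show 0 < 2 * Δ by positivity), div_le_iff₀ (by positivity)]
    calc ε * |s₁ c - s₂ c| ≤ ε * Δ := mul_le_mul_of_nonneg_left (hs c) hε
      _ = ε / 2 * (2 * Δ) := by ring
  intro c
  simpa only [mul_div_cancel₀ ε two_ne_zero] using
    exp_div_sum_exp_le_of_abs_sub_le exponent_shift c

/-- The exponential mechanism with sensitivity-`Δ` score function satisfies `ε`-DP:
the output probability mass functions on neighboring score functions `s₁, s₂`
satisfy `P₁(c) ≤ e^ε · P₂(c)` for every candidate `c`. -/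
theorem exponential_mechanism_dp {C : Type*} [Fintype C] [Nonempty C]
    (ε Δ : ℝ) (hε : 0 ≤ ε) (hΔ : 0 < Δ)
    (s₁ s₂ : C → ℝ) (hs : ∀ c, |s₁ c - s₂ c| ≤ Δ) :
    ∀ c : C,
      Real.exp (ε * s₁ c / (2 * Δ)) / (∑ c' : C, Real.exp (ε * s₁ c' / (2 * Δ)))
        ≤ Real.exp ε *
          (Real.exp (ε * s₂ c / (2 * Δ)) / (∑ c' : C, Real.exp (ε * s₂ c' / (2 * Δ)))) :=
  exponential_mechanism_dp_general ε Δ hε hΔ s₁ s₂ hs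
end

section
/- Let C be a finite nonempty set, let ε ≥ 0, Δ > 0, and let s₁, s₂ : C → ℝ satisfy |s₁(c) − s₂(c)| ≤ Δ for every c ∈ C. Define probability mass functions P_i(c) = exp(ε·s_i(c)/(2Δ)) / Σ_{c′∈C} exp(ε·s_i(c′)/(2Δ)) for i = 1, 2. Then for all c, c′ ∈ C, (P₁(c)/P₂(c)) / (P₁(c′)/P₂(c′)) ≤ e^ε; equivalently, the log-likelihood ratios log(P₁(c)/P₂(c)) all lie in a single interval of length ε. That is, the exponential mechanism has ε-bounded range. -/
/-!
The normalizing constants cancel in a ratio of likelihood ratios, which leaves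
`exp (ε * ((s₁ c - s₂ c) - (s₁ c' - s₂ c')) / (2 * Δ))`; both score differences lie in
`[-Δ, Δ]`, so the exponent is at most `ε`.
-/

open Real Finset

noncomputable def expMech {C : Type*} [Fintype C] (ε Δ : ℝ) (s : C → ℝ) (c : C) : ℝ :=
  exp (ε * s c / (2 * Δ)) / ∑ x : C, exp (ε * s x / (2 * Δ))

lemma div_div_div_div_cancel_normalizers {K : Type*} [Field K] {S T : K}
    (hS : S ≠ 0) (hT : T ≠ 0) (a b a' b' : K) :
    a / S / (b / T) / (a' / S / (b' / T)) = a / b / (a' / b') := by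
  have hnorm : ∀ x y : K, x / S / (y / T) = x / y * (T / S) := fun x y => by
    rw [div_div_div_eq, div_mul_div_comm, mul_comm S]
  rw [hnorm, hnorm, mul_div_mul_right _ _ (div_ne_zero hT hS)]

lemma exp_div_exp_div_exp_div_exp (x y x' y' : ℝ) :
    exp x / exp y / (exp x' / exp y') = exp (x - y - (x' - y')) := by
  rw [← exp_sub, ← exp_sub, ← exp_sub]

lemma expMech_div_expMech_div {C : Type*} [Fintype C] (ε Δ : ℝ) (s₁ s₂ : C → ℝ) (c c' : C) :
    expMech ε Δ s₁ c / expMech ε Δ s₂ c / (expMech ε Δ s₁ c' / expMech ε Δ s₂ c') =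
      exp (ε * ((s₁ c - s₂ c) - (s₁ c' - s₂ c')) / (2 * Δ)) := by
  have hZ : ∀ s : C → ℝ, ∑ x : C, exp (ε * s x / (2 * Δ)) ≠ 0 := fun s =>
    (sum_pos (fun x _ => exp_pos _) ⟨c, mem_univ c⟩).ne'
  rw [expMech, expMech, expMech, expMech, div_div_div_div_cancel_normalizers (hZ s₁) (hZ s₂),
    exp_div_exp_div_exp_div_exp]
  ring_nf

lemma mul_sub_div_two_mul_le_of_abs_le {ε Δ d d' : ℝ} (hε : 0 ≤ ε) (hd : |d| ≤ Δ)
    (hd' : |d'| ≤ Δ) : ε * (d - d') / (2 * Δ) ≤ ε := by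
  have hspread : d - d' ≤ 2 * Δ := by linarith [le_abs_self d, neg_abs_le d']
  rw [mul_div_assoc]
  exact mul_le_of_le_one_right hε
    (div_le_one_of_le₀ hspread (by linarith [(abs_nonneg d).trans hd]))

theorem exponential_mechanism_bounded_range_general {C : Type*} [Fintype C]
    (ε Δ : ℝ) (hε : 0 ≤ ε)
    (s₁ s₂ : C → ℝ) (hs : ∀ c, |s₁ c - s₂ c| ≤ Δ) :
    ∀ c c' : C,
      ((Real.exp (ε * s₁ c / (2 * Δ)) / (∑ x : C, Real.exp (ε * s₁ x / (2 * Δ)))) /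
        (Real.exp (ε * s₂ c / (2 * Δ)) / (∑ x : C, Real.exp (ε * s₂ x / (2 * Δ))))) /
      ((Real.exp (ε * s₁ c' / (2 * Δ)) / (∑ x : C, Real.exp (ε * s₁ x / (2 * Δ)))) /
        (Real.exp (ε * s₂ c' / (2 * Δ)) / (∑ x : C, Real.exp (ε * s₂ x / (2 * Δ)))))
      ≤ Real.exp ε := by
  intro c c'
  change expMech ε Δ s₁ c / expMech ε Δ s₂ c / (expMech ε Δ s₁ c' / expMech ε Δ s₂ c') ≤ exp ε
  rw [expMech_div_expMech_div, exp_le_exp]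
  exact mul_sub_div_two_mul_le_of_abs_le hε (hs c) (hs c')

/-- The exponential mechanism has `ε`-bounded range: for the output probability mass
functions `P₁, P₂` on neighboring score functions `s₁, s₂` of sensitivity `Δ`, the
ratios of likelihood ratios satisfy `(P₁(c)/P₂(c)) / (P₁(c')/P₂(c')) ≤ e^ε`. -/
theorem exponential_mechanism_bounded_range {C : Type*} [Fintype C] [Nonempty C]
    (ε Δ : ℝ) (hε : 0 ≤ ε) (hΔ : 0 < Δ)
    (s₁ s₂ : C → ℝ) (hs : ∀ c, |s₁ c - s₂ c| ≤ Δ) :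
    ∀ c c' : C,
      ((Real.exp (ε * s₁ c / (2 * Δ)) / (∑ x : C, Real.exp (ε * s₁ x / (2 * Δ)))) /
        (Real.exp (ε * s₂ c / (2 * Δ)) / (∑ x : C, Real.exp (ε * s₂ x / (2 * Δ))))) /
      ((Real.exp (ε * s₁ c' / (2 * Δ)) / (∑ x : C, Real.exp (ε * s₁ x / (2 * Δ)))) /
        (Real.exp (ε * s₂ c' / (2 * Δ)) / (∑ x : C, Real.exp (ε * s₂ x / (2 * Δ)))))
      ≤ Real.exp ε :=
  exponential_mechanism_bounded_range_general ε Δ hε s₁ s₂ hs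
end

section
/- Let C be a finite nonempty set and let P, Q be probability mass functions on C with Q(c) > 0 and P(c) > 0 for all c ∈ C. Suppose there exist ε ≥ 0 and t ∈ ℝ such that t ≤ log(P(c)/Q(c)) ≤ t + ε for every c ∈ C. Then for every α ∈ (1,∞), (1/(α−1)) · log( Σ_{c∈C} Q(c) · (P(c)/Q(c))^α ) ≤ α·ε²/8. Hence an ε-bounded-range mechanism, in particular the exponential mechanism with privacy parameter ε, satisfies (ε²/8)-zCDP. -/
/-! Let `X = log (P / Q)` be the privacy loss, viewed as a random variable under `P`. It takes
values in an interval of length `ε`, so Hoeffding's lemma gives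
`E_P[exp (λ X)] ≤ exp (λ E_P[X] + λ² ε² / 8)` for every `λ`. At `λ = -1` the left side is
`Σ Q = 1`, which bounds the mean `E_P[X] = KL(P ‖ Q)` by `ε² / 8`; at `λ = α - 1` the left side is
`Σ Q (P / Q)^α`, and the bound becomes `exp ((α - 1) α ε² / 8)`. -/

open Real Finset MeasureTheory ProbabilityTheory

section Hoeffding

variable {Ω : Type*} [MeasurableSpace Ω] {μ : Measure Ω} [IsProbabilityMeasure μ] {X : Ω → ℝ}
  {a b : ℝ}

lemma mgf_le_exp_mul_integral_of_mem_Icc (hm : AEMeasurable X μ)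
    (hb : ∀ᵐ ω ∂μ, X ω ∈ Set.Icc a b) (l : ℝ) :
    mgf X μ l ≤ exp (l * μ[X] + l ^ 2 * (b - a) ^ 2 / 8) := by
  have hcentred := (hasSubgaussianMGF_of_mem_Icc hm hb).mgf_le l
  have hshift : mgf X μ l = exp (l * μ[X]) * mgf (fun ω ↦ X ω - μ[X]) μ l := by
    rw [← mgf_const_add]
    simp
  rw [hshift, exp_add]
  gcongr
  refine hcentred.trans_eq (congrArg exp ?_)
  push_cast
  rw [norm_eq_abs, div_pow, sq_abs]
  ring

lemma integral_le_of_mgf_neg_one_eq_one (hm : AEMeasurable X μ)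
    (hb : ∀ᵐ ω ∂μ, X ω ∈ Set.Icc a b) (h : mgf X μ (-1) = 1) :
    μ[X] ≤ (b - a) ^ 2 / 8 := by
  have := mgf_le_exp_mul_integral_of_mem_Icc hm hb (-1)
  rw [h, one_le_exp_iff] at this
  linarith

lemma mgf_le_of_mem_Icc_of_mgf_neg_one_eq_one (hm : AEMeasurable X μ)
    (hb : ∀ᵐ ω ∂μ, X ω ∈ Set.Icc a b) (h : mgf X μ (-1) = 1) {l : ℝ} (hl : 0 ≤ l) :
    mgf X μ l ≤ exp (l * (l + 1) * (b - a) ^ 2 / 8) := by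
  calc mgf X μ l ≤ exp (l * μ[X] + l ^ 2 * (b - a) ^ 2 / 8) :=
        mgf_le_exp_mul_integral_of_mem_Icc hm hb l
    _ ≤ exp (l * ((b - a) ^ 2 / 8) + l ^ 2 * (b - a) ^ 2 / 8) := by
        gcongr
        exact integral_le_of_mgf_neg_one_eq_one hm hb h
    _ = exp (l * (l + 1) * (b - a) ^ 2 / 8) := by ring_nf

end Hoeffding

lemma exists_isProbabilityMeasure_integral_eq_sum {C : Type*} [Fintype C] [MeasurableSpace C]
    [MeasurableSingletonClass C] (P : C → ℝ) (hP : ∀ c, 0 ≤ P c) (hPsum : ∑ c, P c = 1) :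
    ∃ μ : Measure C, IsProbabilityMeasure μ ∧ ∀ f : C → ℝ, ∫ c, f c ∂μ = ∑ c, P c * f c := by
  have hsum : ∑ c, ENNReal.ofReal (P c) = 1 := by
    rw [← ENNReal.ofReal_sum_of_nonneg fun c _ ↦ hP c, hPsum, ENNReal.ofReal_one]
  refine ⟨(PMF.ofFintype _ hsum).toMeasure, inferInstance, fun f ↦ ?_⟩
  simp [PMF.integral_eq_sum, ENNReal.toReal_ofReal (hP _)]

theorem bounded_range_zcdp_general {C : Type*} [Fintype C]
    (P Q : C → ℝ) (hP : ∀ c, 0 < P c) (hQ : ∀ c, 0 < Q c)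
    (hPsum : ∑ c, P c = 1) (hQsum : ∑ c, Q c = 1)
    (ε t : ℝ)
    (hbr : ∀ c, t ≤ Real.log (P c / Q c) ∧ Real.log (P c / Q c) ≤ t + ε) :
    ∀ α : ℝ, 1 < α →
      (1 / (α - 1)) * Real.log (∑ c, Q c * (P c / Q c) ^ α) ≤ α * ε ^ 2 / 8 := by
  intro α hα
  let _ : MeasurableSpace C := ⊤
  obtain ⟨μ, _, hμ⟩ := exists_isProbabilityMeasure_integral_eq_sum P (fun c ↦ (hP c).le) hPsum
  set X : C → ℝ := fun c ↦ log (P c / Q c)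
  have hexpX (c : C) : exp (X c) = P c / Q c := exp_log (div_pos (hP c) (hQ c))
  have hmgf (l : ℝ) : mgf X μ l = ∑ c, P c * exp (l * X c) := hμ _
  have hnormalized : mgf X μ (-1) = 1 := by
    rw [hmgf]
    conv_rhs => rw [← hQsum]
    refine sum_congr rfl fun c _ ↦ ?_
    rw [neg_one_mul, exp_neg, hexpX]
    field_simp [(hP c).ne', (hQ c).ne']
  have hrenyi : ∑ c, Q c * (P c / Q c) ^ α = mgf X μ (α - 1) := by
    rw [hmgf]
    refine sum_congr rfl fun c _ ↦ ?_
    rw [← hexpX, ← exp_mul, show X c * α = X c + (α - 1) * X c by ring, exp_add, hexpX]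
    field_simp [(hQ c).ne']
  have hbound := mgf_le_of_mem_Icc_of_mgf_neg_one_eq_one Measurable.of_discrete.aemeasurable
    (ae_of_all μ hbr) hnormalized (sub_nonneg.2 hα.le)
  rw [hrenyi, one_div, inv_mul_le_iff₀ (sub_pos.2 hα)]
  calc log (mgf X μ (α - 1)) ≤ (α - 1) * (α - 1 + 1) * (t + ε - t) ^ 2 / 8 :=
        (log_le_iff_le_exp (mgf_pos Integrable.of_finite)).2 hbound
    _ = (α - 1) * (α * ε ^ 2 / 8) := by ring

/-- An `ε`-bounded-range mechanism satisfies `(ε²/8)`-zCDP: if all log-likelihood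
ratios `log(P(c)/Q(c))` lie in `[t, t + ε]`, then for every `α ∈ (1,∞)` the Rényi
divergence `(α−1)⁻¹ · log Σ Q(c)·(P(c)/Q(c))^α` is at most `α·ε²/8`. -/
theorem bounded_range_zcdp {C : Type*} [Fintype C] [Nonempty C]
    (P Q : C → ℝ) (hP : ∀ c, 0 < P c) (hQ : ∀ c, 0 < Q c)
    (hPsum : ∑ c, P c = 1) (hQsum : ∑ c, Q c = 1)
    (ε t : ℝ) (hε : 0 ≤ ε)
    (hbr : ∀ c, t ≤ Real.log (P c / Q c) ∧ Real.log (P c / Q c) ≤ t + ε) :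
    ∀ α : ℝ, 1 < α →
      (1 / (α - 1)) * Real.log (∑ c, Q c * (P c / Q c) ^ α) ≤ α * ε ^ 2 / 8 :=
  bounded_range_zcdp_general P Q hP hQ hPsum hQsum ε t hbr
end

section
/- Let P and Q be probability measures on a measurable space, mutually absolutely continuous, and let ε ≥ 0. Suppose the Radon–Nikodym derivative satisfies e^{−ε} ≤ dP/dQ ≤ e^{ε} Q-almost everywhere (equivalently, P(S) ≤ e^ε·Q(S) and Q(S) ≤ e^ε·P(S) for all measurable S). Then for every α ∈ (1,∞), the Rényi divergence satisfies D_α(P‖Q) ≤ α·ε²/2. Hence every ε-DP mechanism satisfies (ε²/2)-zCDP. -/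
/-!
Write `a = e^{-ε}`, `b = e^ε` and `r = dP/dQ ∈ [a, b]`. By convexity `r^α` lies below the chord
of `t ↦ t^α` over `[a, b]`; integrating against `Q` and using `∫ r dQ = 1` gives
`∫ r^α dQ ≤ ((b - 1) a^α + (1 - a) b^α) / (b - a) = cosh ((α - 1/2) ε) / cosh (ε / 2)`.
Since `tanh s ≤ s`, the function `s ↦ cosh s · e^{-s²/2}` decreases on `[0, ∞)`, so this ratio is
at most `exp (((α - 1/2)² - 1/4) ε² / 2) = exp (α (α - 1) ε² / 2)`.
-/

open MeasureTheory Real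

open Set

lemma ConvexOn.sub_mul_le_chord {𝕜 : Type*} [Field 𝕜] [LinearOrder 𝕜] [IsStrictOrderedRing 𝕜]
    {s : Set 𝕜} {f : 𝕜 → 𝕜} (hf : ConvexOn 𝕜 s f) {a b t : 𝕜} (ha : a ∈ s) (hb : b ∈ s)
    (ht : t ∈ Icc a b) : (b - a) * f t ≤ (b - t) * f a + (t - a) * f b := by
  rcases ht.1.eq_or_lt with rfl | hat
  · simp
  rcases ht.2.eq_or_lt with rfl | htb
  · simp
  exact hf.secant_mono_aux1 ha hb hat htb

theorem ConvexOn.integral_comp_le_chord {Ω : Type*} [MeasurableSpace Ω] {μ : Measure Ω}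
    [IsProbabilityMeasure μ] {φ : ℝ → ℝ} {f : Ω → ℝ} {a b : ℝ} (hφ : ConvexOn ℝ (Icc a b) φ)
    (hf : ∀ᵐ x ∂μ, f x ∈ Icc a b) (hf_meas : AEMeasurable f μ)
    (hφf : Integrable (fun x => φ (f x)) μ) :
    (b - a) * ∫ x, φ (f x) ∂μ ≤ (b - ∫ x, f x ∂μ) * φ a + (∫ x, f x ∂μ - a) * φ b := by
  obtain ⟨x₀, hx₀⟩ := hf.exists
  have hab : a ≤ b := hx₀.1.trans hx₀.2
  have hfi : Integrable f μ := .of_mem_Icc a b hf_meas hf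
  have hchord : ∀ᵐ x ∂μ, (b - a) * φ (f x) ≤ (b * φ a - a * φ b) + f x * (φ b - φ a) :=
    hf.mono fun x hx => by
      linarith [hφ.sub_mul_le_chord (left_mem_Icc.2 hab) (right_mem_Icc.2 hab) hx]
  calc (b - a) * ∫ x, φ (f x) ∂μ = ∫ x, (b - a) * φ (f x) ∂μ := (integral_const_mul _ _).symm
    _ ≤ ∫ x, ((b * φ a - a * φ b) + f x * (φ b - φ a)) ∂μ :=
        integral_mono_ae (hφf.const_mul _) ((integrable_const _).add (hfi.mul_const _)) hchord
    _ = _ := by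
        rw [integral_add (integrable_const _) (hfi.mul_const _), integral_const,
          integral_mul_const]
        simp only [probReal_univ, one_smul]
        ring

namespace Real

lemma sinh_le_mul_cosh {t : ℝ} (ht : 0 ≤ t) : sinh t ≤ t * cosh t := by
  rcases ht.eq_or_lt with rfl | ht
  · simp
  obtain ⟨ξ, hξ, hderiv⟩ := exists_deriv_eq_slope sinh ht continuous_sinh.continuousOn
    differentiable_sinh.differentiableOn
  rw [deriv_sinh, sinh_zero, sub_zero, sub_zero, eq_div_iff ht.ne'] at hderiv
  have hcosh : cosh ξ ≤ cosh t := cosh_le_cosh.2 (by simp [abs_of_pos hξ.1, abs_of_pos ht, hξ.2.le])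
  nlinarith

lemma antitoneOn_cosh_mul_exp_neg_sq :
    AntitoneOn (fun s => cosh s * exp (-(s ^ 2 / 2))) (Ici 0) := by
  have hderiv (s : ℝ) : HasDerivAt (fun s => cosh s * exp (-(s ^ 2 / 2)))
      ((sinh s - s * cosh s) * exp (-(s ^ 2 / 2))) s := by
    have hexponent : HasDerivAt (fun s : ℝ => -(s ^ 2 / 2)) (-s) s := by
      simpa using ((hasDerivAt_pow 2 s).div_const 2).fun_neg
    exact ((hasDerivAt_cosh s).mul hexponent.exp).congr_deriv (by ring)
  refine antitoneOn_of_deriv_nonpos (convex_Ici 0) (by fun_prop)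
    (fun s _ => (hderiv s).differentiableAt.differentiableWithinAt) fun s hs => ?_
  rw [interior_Ici] at hs
  rw [(hderiv s).deriv]
  exact mul_nonpos_of_nonpos_of_nonneg (sub_nonpos.2 (sinh_le_mul_cosh (le_of_lt hs)))
    (exp_pos _).le

lemma cosh_le_cosh_mul_exp {x y : ℝ} (hy : 0 ≤ y) (hyx : y ≤ x) :
    cosh x ≤ cosh y * exp ((x ^ 2 - y ^ 2) / 2) := by
  have h := antitoneOn_cosh_mul_exp_neg_sq hy (hy.trans hyx) hyx
  calc cosh x = cosh x * exp (-(x ^ 2 / 2)) * exp (x ^ 2 / 2) := by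
        rw [mul_assoc, ← exp_add, neg_add_cancel, exp_zero, mul_one]
    _ ≤ cosh y * exp (-(y ^ 2 / 2)) * exp (x ^ 2 / 2) := by gcongr
    _ = cosh y * exp ((x ^ 2 - y ^ 2) / 2) := by rw [mul_assoc, ← exp_add]; ring_nf

lemma exp_chord_rpow_le {ε α : ℝ} (hε : 0 ≤ ε) (hα : 1 ≤ α) :
    (exp ε - 1) * exp (-ε) ^ α + (1 - exp (-ε)) * exp ε ^ α ≤
      (exp ε - exp (-ε)) * exp (α * (α - 1) * ε ^ 2 / 2) := by
  have hchord : (exp ε - 1) * exp (-ε) ^ α + (1 - exp (-ε)) * exp ε ^ α =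
      4 * sinh (ε / 2) * cosh ((α - 1 / 2) * ε) := by
    simp only [sinh_eq, cosh_eq, ← exp_mul]
    ring_nf
    simp only [← exp_add]
    ring_nf
  have hsecant : exp ε - exp (-ε) = 4 * sinh (ε / 2) * cosh (ε / 2) := by
    have h := sinh_two_mul (ε / 2)
    rw [mul_div_cancel₀ ε two_ne_zero, sinh_eq] at h
    linarith
  have hcosh := cosh_le_cosh_mul_exp (x := (α - 1 / 2) * ε) (y := ε / 2) (by positivity)
    (by nlinarith)
  have hsinh : 0 ≤ sinh (ε / 2) := sinh_nonneg_iff.2 (by positivity)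
  calc _ = 4 * sinh (ε / 2) * cosh ((α - 1 / 2) * ε) := hchord
    _ ≤ 4 * sinh (ε / 2) * (cosh (ε / 2) * exp ((((α - 1 / 2) * ε) ^ 2 - (ε / 2) ^ 2) / 2)) := by
        gcongr
    _ = _ := by rw [hsecant]; ring_nf

end Real

theorem integral_rpow_le_exp_of_integral_eq_one {Ω : Type*} [MeasurableSpace Ω]
    {μ : Measure Ω} [IsProbabilityMeasure μ] {f : Ω → ℝ} {ε α : ℝ} (hε : 0 ≤ ε) (hα : 1 ≤ α)
    (hf : ∀ᵐ x ∂μ, f x ∈ Icc (exp (-ε)) (exp ε)) (hf_meas : AEMeasurable f μ)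
    (hf_mean : ∫ x, f x ∂μ = 1) :
    ∫ x, f x ^ α ∂μ ≤ exp (α * (α - 1) * ε ^ 2 / 2) := by
  rcases hε.eq_or_lt with rfl | hε
  · have hf_one : ∀ᵐ x ∂μ, f x ^ α = 1 := hf.mono fun x hx => by
      simp only [neg_zero, exp_zero, mem_Icc] at hx
      rw [le_antisymm hx.2 hx.1, one_rpow]
    simp [integral_congr_ae hf_one]
  have hα₀ : 0 ≤ α := zero_le_one.trans hα
  have hfα_int : Integrable (fun x => f x ^ α) μ :=
    .of_mem_Icc (exp (-ε) ^ α) (exp ε ^ α) (hf_meas.pow_const α) <|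
      hf.mono fun x hx => ⟨rpow_le_rpow (exp_pos _).le hx.1 hα₀,
        rpow_le_rpow ((exp_pos _).le.trans hx.1) hx.2 hα₀⟩
  have hconvex : ConvexOn ℝ (Icc (exp (-ε)) (exp ε)) fun t : ℝ => t ^ α :=
    (convexOn_rpow hα).subset (fun t ht => (exp_pos _).le.trans ht.1) (convex_Icc _ _)
  have hchord := hconvex.integral_comp_le_chord hf hf_meas hfα_int
  rw [hf_mean] at hchord
  have hwidth : 0 < exp ε - exp (-ε) := sub_pos.2 (exp_lt_exp.2 (by linarith))
  exact le_of_mul_le_mul_left (hchord.trans (exp_chord_rpow_le hε.le hα)) hwidth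

theorem pure_dp_to_zcdp_general {Ω : Type*} [MeasurableSpace Ω]
    (P Q : Measure Ω) [IsProbabilityMeasure P] [IsProbabilityMeasure Q]
    (hPQ : P ≪ Q) (ε : ℝ) (hε : 0 ≤ ε)
    (hbound : ∀ᵐ x ∂Q, Real.exp (-ε) ≤ ((P.rnDeriv Q) x).toReal ∧
      ((P.rnDeriv Q) x).toReal ≤ Real.exp ε) :
    ∀ α : ℝ, 1 < α → renyiDiv α P Q ≤ α * ε ^ 2 / 2 := by
  intro α hα
  have hα₁ : 0 < α - 1 := sub_pos.2 hα
  have hlog : log (∫ x, (P.rnDeriv Q x).toReal ^ α ∂Q) ≤ α * (α - 1) * ε ^ 2 / 2 := by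
    have hmean : ∫ x, (P.rnDeriv Q x).toReal ∂Q = 1 := by
      simp [Measure.integral_toReal_rnDeriv hPQ]
    have hmoment := integral_rpow_le_exp_of_integral_eq_one hε hα.le hbound
      (Measure.measurable_rnDeriv P Q).ennreal_toReal.aemeasurable hmean
    have hnonneg : 0 ≤ ∫ x, (P.rnDeriv Q x).toReal ^ α ∂Q := integral_nonneg fun x => by positivity
    rcases hnonneg.eq_or_lt with hzero | hpos
    · rw [← hzero, log_zero]
      positivity
    · exact (log_le_iff_le_exp hpos).2 hmoment
  calc renyiDiv α P Q ≤ (α - 1)⁻¹ * (α * (α - 1) * ε ^ 2 / 2) :=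
        mul_le_mul_of_nonneg_left hlog (inv_nonneg.2 hα₁.le)
    _ = α * ε ^ 2 / 2 := by field_simp

/-- Every `ε`-DP mechanism satisfies `(ε²/2)`-zCDP: if `e^{−ε} ≤ dP/dQ ≤ e^{ε}`
`Q`-a.e., then `D_α(P‖Q) ≤ α·ε²/2` for every `α ∈ (1,∞)`. -/
theorem pure_dp_to_zcdp {Ω : Type*} [MeasurableSpace Ω]
    (P Q : Measure Ω) [IsProbabilityMeasure P] [IsProbabilityMeasure Q]
    (hPQ : P ≪ Q) (hQP : Q ≪ P) (ε : ℝ) (hε : 0 ≤ ε)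
    (hbound : ∀ᵐ x ∂Q, Real.exp (-ε) ≤ ((P.rnDeriv Q) x).toReal ∧
      ((P.rnDeriv Q) x).toReal ≤ Real.exp ε) :
    ∀ α : ℝ, 1 < α → renyiDiv α P Q ≤ α * ε ^ 2 / 2 :=
  pure_dp_to_zcdp_general P Q hPQ ε hε hbound
end
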